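/- arXiv:2408.02807 — 5 statements merged into one kernel-verified Lean document; each statement's English description precedes it below -/
import Mathlib

section
/- The determinant of the 4×4 covariance matrix K = [[Q, 0, ρ2√(QV2), ρ3√(QP)],[0, V1, ρ4√(V1V2), ρ5√(V1P)],[ρ2√(QV2), ρ4√(V1V2), V2, ρ6√(V2P)],[ρ3√(QP), ρ5√(V1P), ρ6√(V2P), P]] with ρ6 = ρ2ρ3 + ρ4ρ5 equals Q·V1·V2·P·(−1 + ρ2² + ρ4²)·(−1 + ρ3² + ρ5²). -/
/-!
Writing `σ = (√Q, √V1, √V2, √P)`, the matrix is `diag σ * C * diag σ` with `C` the correlation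
matrix, so its determinant is `Q V1 V2 P * det C`. In block form `C = [[1, B], [Bᵀ, D]]` with
`B = [[ρ2, ρ3], [ρ4, ρ5]]`, and the choice `ρ6 = ρ2ρ3 + ρ4ρ5` makes the Schur complement
`D - Bᵀ B` diagonal, with diagonal entries `1 - ρ2² - ρ4²` and `1 - ρ3² - ρ5²`.
-/

open Real Matrix

theorem det_correlation_fin_four {R : Type*} [CommRing R] (a b c d : R) :
    det !![1, 0, a, b;
           0, 1, c, d;
           a, c, 1, a * b + c * d;
           b, d, a * b + c * d, 1] =
      (-1 + a ^ 2 + c ^ 2) * (-1 + b ^ 2 + d ^ 2) := by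
  set B : Matrix (Fin 2) (Fin 2) R := !![a, b; c, d]
  have hblocks : !![1, 0, a, b; 0, 1, c, d; a, c, 1, a * b + c * d; b, d, a * b + c * d, 1] =
      (fromBlocks 1 B Bᵀ !![1, a * b + c * d; a * b + c * d, 1]).submatrix
        finSumFinEquiv.symm finSumFinEquiv.symm := by
    ext i j
    fin_cases i <;> fin_cases j <;> rfl
  have hschur : !![1, a * b + c * d; a * b + c * d, 1] - Bᵀ * B =
      !![1 - a ^ 2 - c ^ 2, 0; 0, 1 - b ^ 2 - d ^ 2] := by
    ext i j
    fin_cases i <;> fin_cases j <;> simp [B, mul_apply, Fin.sum_univ_two] <;> ring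
  rw [hblocks, det_submatrix_equiv_self, det_fromBlocks_one₁₁, hschur, det_fin_two_of]
  ring

theorem cov4_det_identity_general
    (Q V1 V2 P ρ2 ρ3 ρ4 ρ5 ρ6 : ℝ)
    (hQ : 0 < Q) (hV1 : 0 < V1) (hV2 : 0 < V2) (hP : 0 < P)
    (hρ6 : ρ6 = ρ2 * ρ3 + ρ4 * ρ5) :
    Matrix.det
      !![Q, 0, ρ2 * Real.sqrt (Q * V2), ρ3 * Real.sqrt (Q * P);
         0, V1, ρ4 * Real.sqrt (V1 * V2), ρ5 * Real.sqrt (V1 * P);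
         ρ2 * Real.sqrt (Q * V2), ρ4 * Real.sqrt (V1 * V2), V2, ρ6 * Real.sqrt (V2 * P);
         ρ3 * Real.sqrt (Q * P), ρ5 * Real.sqrt (V1 * P), ρ6 * Real.sqrt (V2 * P), P] =
    Q * V1 * V2 * P * (-1 + ρ2 ^ 2 + ρ4 ^ 2) * (-1 + ρ3 ^ 2 + ρ5 ^ 2) := by
  set σ : Fin 4 → ℝ := ![√Q, √V1, √V2, √P]
  have hK : !![Q, 0, ρ2 * √(Q * V2), ρ3 * √(Q * P);
               0, V1, ρ4 * √(V1 * V2), ρ5 * √(V1 * P);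
               ρ2 * √(Q * V2), ρ4 * √(V1 * V2), V2, ρ6 * √(V2 * P);
               ρ3 * √(Q * P), ρ5 * √(V1 * P), ρ6 * √(V2 * P), P] =
      diagonal σ * !![1, 0, ρ2, ρ3;
                      0, 1, ρ4, ρ5;
                      ρ2, ρ4, 1, ρ2 * ρ3 + ρ4 * ρ5;
                      ρ3, ρ5, ρ2 * ρ3 + ρ4 * ρ5, 1] * diagonal σ := by
    subst hρ6
    ext i j
    fin_cases i <;> fin_cases j <;>
      simp [σ, sqrt_mul, mul_self_sqrt, hQ.le, hV1.le, hV2.le, hP.le] <;> ring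
  have hσ : (∏ i, σ i) ^ 2 = Q * V1 * V2 * P := by
    simp only [σ, Fin.prod_univ_four, Matrix.cons_val, mul_pow, sq_sqrt hQ.le, sq_sqrt hV1.le,
      sq_sqrt hV2.le, sq_sqrt hP.le]
  rw [hK, det_mul, det_mul, det_diagonal, det_correlation_fin_four, ← hσ]
  ring

/-- Determinant of the 4×4 covariance matrix `K` of `(X0, W1, W2, U1)` with
`X0 ⊥ W1` and `ρ6 = ρ2ρ3 + ρ4ρ5` equals
`Q·V1·V2·P·(−1 + ρ2² + ρ4²)·(−1 + ρ3² + ρ5²)`. -/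
theorem cov4_det_identity
    (Q V1 V2 P ρ2 ρ3 ρ4 ρ5 ρ6 : ℝ)
    (hQ : 0 < Q) (hV1 : 0 < V1) (hV2 : 0 < V2) (hP : 0 < P)
    (hρ2 : ρ2 ∈ Set.Icc (-1 : ℝ) 1) (hρ3 : ρ3 ∈ Set.Icc (-1 : ℝ) 1)
    (hρ4 : ρ4 ∈ Set.Icc (-1 : ℝ) 1) (hρ5 : ρ5 ∈ Set.Icc (-1 : ℝ) 1)
    (hρ6 : ρ6 = ρ2 * ρ3 + ρ4 * ρ5) :
    Matrix.det
      !![Q, 0, ρ2 * Real.sqrt (Q * V2), ρ3 * Real.sqrt (Q * P);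
         0, V1, ρ4 * Real.sqrt (V1 * V2), ρ5 * Real.sqrt (V1 * P);
         ρ2 * Real.sqrt (Q * V2), ρ4 * Real.sqrt (V1 * V2), V2, ρ6 * Real.sqrt (V2 * P);
         ρ3 * Real.sqrt (Q * P), ρ5 * Real.sqrt (V1 * P), ρ6 * Real.sqrt (V2 * P), P] =
    Q * V1 * V2 * P * (-1 + ρ2 ^ 2 + ρ4 ^ 2) * (-1 + ρ3 ^ 2 + ρ5 ^ 2) :=
  cov4_det_identity_general Q V1 V2 P ρ2 ρ3 ρ4 ρ5 ρ6 hQ hV1 hV2 hP hρ6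
end

section
/- For Q, N > 0 with Q > 4N and P ∈ [P1, P2] (where P1, P2 are the roots of (P+N)² = QP), the line segment cost N(Q − N − P)/Q is less than or equal to the affine cost (√Q − √P)²·N/((√Q − √P)² + N), with equality exactly at P = P1 and P = P2. -/
open Real

/-- On `[P1, P2]` (roots of `(P+N)² = QP`, `Q > 4N`), the segment cost
`N(Q−N−P)/Q` is below the affine cost `Sℓ(P)`, with equality exactly at the
endpoints. -/
theorem segment_le_affine_cost (Q N P : ℝ) (hQ : 0 < Q) (hN : 0 < N)
    (h : Q > 4 * N)
    (hP : P ∈ Set.Icc ((Q - 2 * N - Real.sqrt (Q ^ 2 - 4 * Q * N)) / 2)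
        ((Q - 2 * N + Real.sqrt (Q ^ 2 - 4 * Q * N)) / 2)) :
    N * (Q - N - P) / Q ≤
      (Real.sqrt Q - Real.sqrt P) ^ 2 * N / ((Real.sqrt Q - Real.sqrt P) ^ 2 + N) ∧
    (N * (Q - N - P) / Q =
        (Real.sqrt Q - Real.sqrt P) ^ 2 * N / ((Real.sqrt Q - Real.sqrt P) ^ 2 + N) ↔
      P = (Q - 2 * N - Real.sqrt (Q ^ 2 - 4 * Q * N)) / 2 ∨
      P = (Q - 2 * N + Real.sqrt (Q ^ 2 - 4 * Q * N)) / 2) := by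
  obtain ⟨hP1, hP2⟩ := hP
  have hdisc : (0:ℝ) ≤ Q ^ 2 - 4 * Q * N := by nlinarith
  set d := Real.sqrt (Q ^ 2 - 4 * Q * N) with hddef
  have hd2 : d ^ 2 = Q ^ 2 - 4 * Q * N := Real.sq_sqrt hdisc
  have hdnn : 0 ≤ d := Real.sqrt_nonneg _
  have hdlt : d < Q - 2 * N := by nlinarith [hd2, hdnn]
  have hPpos : 0 < P := by nlinarith
  have hs2 : Real.sqrt Q ^ 2 = Q := Real.sq_sqrt hQ.le
  have ht2 : Real.sqrt P ^ 2 = P := Real.sq_sqrt hPpos.le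
  set s := Real.sqrt Q with hsdef
  set t := Real.sqrt P with htdef
  have hs0 : 0 < s := Real.sqrt_pos.mpr hQ
  have ht0 : 0 < t := Real.sqrt_pos.mpr hPpos
  have hD : 0 < (s - t) ^ 2 + N := by positivity
  have key : (s - t) ^ 2 * N / ((s - t) ^ 2 + N) - N * (Q - N - P) / Q
      = N * (s * t - (P + N)) ^ 2 / (Q * ((s - t) ^ 2 + N)) := by
    rw [← hs2, ← ht2]
    have h1 : ((s - t) ^ 2 + N) ≠ 0 := by positivity
    have h2 : s ^ 2 ≠ 0 := by positivity
    field_simp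
    ring
  have hfac : (P + N) ^ 2 - Q * P
      = (P - (Q - 2 * N - d) / 2) * (P - (Q - 2 * N + d) / 2) := by
    linear_combination ((1:ℝ)/4) * hd2
  have hnn : 0 ≤ N * (s * t - (P + N)) ^ 2 / (Q * ((s - t) ^ 2 + N)) := by positivity
  constructor
  · linarith [key]
  constructor
  · intro heq
    have h0 : N * (s * t - (P + N)) ^ 2 / (Q * ((s - t) ^ 2 + N)) = 0 := by
      rw [← key]; linarith
    have hden : Q * ((s - t) ^ 2 + N) ≠ 0 := by positivity
    have hnum : N * (s * t - (P + N)) ^ 2 = 0 :=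
      (div_eq_zero_iff.mp h0).resolve_right hden
    have hsq : (s * t - (P + N)) ^ 2 = 0 := by
      rcases mul_eq_zero.mp hnum with h' | h'
      · exact absurd h' hN.ne'
      · exact h'
    have hst : s * t = P + N := by
      have := pow_eq_zero_iff (n := 2) (by norm_num) |>.mp hsq
      linarith
    have hQP : (P + N) ^ 2 = Q * P := by
      rw [← hst, mul_pow, hs2, ht2]
    have : (P - (Q - 2 * N - d) / 2) * (P - (Q - 2 * N + d) / 2) = 0 := by
      rw [← hfac]; linarith
    rcases mul_eq_zero.mp this with h' | h'
    · left; linarith [sub_eq_zero.mp h']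
    · right; linarith [sub_eq_zero.mp h']
  · intro hor
    have hQP : Q * P = (P + N) ^ 2 := by
      rcases hor with h' | h'
      · rw [h']; linear_combination (-(1:ℝ)/4) * hd2
      · rw [h']; linear_combination (-(1:ℝ)/4) * hd2
    have hst : s * t = P + N := by
      rw [hsdef, htdef, ← Real.sqrt_mul hQ.le, hQP]
      exact Real.sqrt_sq (by positivity)
    have : N * (s * t - (P + N)) ^ 2 / (Q * ((s - t) ^ 2 + N)) = 0 := by
      rw [hst]; simp
    linarith [key, this]
end

section
/- If Q > 4N > 0 then at the endpoints P1 and P2 (roots of (P+N)² = QP) one has S_ℓ(Pi) = N(Q − N − Pi)/Q for i = 1, 2, i.e., the affine function N(Q−N−P)/Q interpolates S_ℓ at P1 and P2. -/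
open Real

lemma aux_interp (Q N P : ℝ) (hN : 0 < N) (hQ : 0 < Q) (hP : 0 ≤ P)
    (hroot : (P + N) ^ 2 = Q * P) (hPQ : P + N < Q) :
    (Real.sqrt Q - Real.sqrt P) ^ 2 * N / ((Real.sqrt Q - Real.sqrt P) ^ 2 + N) =
      N * (Q - N - P) / Q := by
  have hsQ : Real.sqrt Q ^ 2 = Q := Real.sq_sqrt hQ.le
  have hsP : Real.sqrt P ^ 2 = P := Real.sq_sqrt hP
  have hmul : Real.sqrt Q * Real.sqrt P = P + N := by
    rw [← Real.sqrt_mul hQ.le, ← hroot, Real.sqrt_sq (by positivity)]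
  have hexp : (Real.sqrt Q - Real.sqrt P) ^ 2 = Q - P - 2 * N := by
    have : (Real.sqrt Q - Real.sqrt P) ^ 2 =
        Real.sqrt Q ^ 2 + Real.sqrt P ^ 2 - 2 * (Real.sqrt Q * Real.sqrt P) := by ring
    rw [this, hsQ, hsP, hmul]; ring
  rw [hexp]
  have hden : Q - P - 2 * N + N = Q - P - N := by ring
  rw [hden]
  have hpos : Q - P - N > 0 := by linarith
  field_simp
  nlinarith [hroot]

/-- If `Q > 4N > 0`, then at the roots `P1, P2` of `(P+N)² = QP`, the affine
function `N(Q−N−P)/Q` interpolates `Sℓ`. -/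
theorem affine_interpolates_Sl (Q N : ℝ) (hN : 0 < N) (h : Q > 4 * N) :
    ((Real.sqrt Q - Real.sqrt ((Q - 2 * N - Real.sqrt (Q ^ 2 - 4 * Q * N)) / 2)) ^ 2 * N /
        ((Real.sqrt Q - Real.sqrt ((Q - 2 * N - Real.sqrt (Q ^ 2 - 4 * Q * N)) / 2)) ^ 2 + N) =
      N * (Q - N - (Q - 2 * N - Real.sqrt (Q ^ 2 - 4 * Q * N)) / 2) / Q) ∧
    ((Real.sqrt Q - Real.sqrt ((Q - 2 * N + Real.sqrt (Q ^ 2 - 4 * Q * N)) / 2)) ^ 2 * N /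
        ((Real.sqrt Q - Real.sqrt ((Q - 2 * N + Real.sqrt (Q ^ 2 - 4 * Q * N)) / 2)) ^ 2 + N) =
      N * (Q - N - (Q - 2 * N + Real.sqrt (Q ^ 2 - 4 * Q * N)) / 2) / Q) := by
  have hQ : 0 < Q := by linarith
  have hD : 0 < Q ^ 2 - 4 * Q * N := by nlinarith
  set s := Real.sqrt (Q ^ 2 - 4 * Q * N) with hs
  have hs2 : s ^ 2 = Q ^ 2 - 4 * Q * N := Real.sq_sqrt hD.le
  have hs0 : 0 ≤ s := Real.sqrt_nonneg _
  have hsle : s ≤ Q - 2 * N := by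
    have h1 : Q ^ 2 - 4 * Q * N ≤ (Q - 2 * N) ^ 2 := by nlinarith
    calc s ≤ Real.sqrt ((Q - 2 * N) ^ 2) := Real.sqrt_le_sqrt h1
      _ = Q - 2 * N := Real.sqrt_sq (by linarith)
  have hslt : s < Q := by
    have h1 : Q ^ 2 - 4 * Q * N < Q ^ 2 := by nlinarith
    calc s < Real.sqrt (Q ^ 2) := Real.sqrt_lt_sqrt hD.le h1
      _ = Q := Real.sqrt_sq hQ.le
  constructor
  · exact aux_interp Q N _ hN hQ (by linarith) (by nlinarith) (by nlinarith)
  · exact aux_interp Q N _ hN hQ (by linarith) (by nlinarith) (by nlinarith)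
end

section
/- Let Q, N > 0. The function S_ℓ(P) = (√Q − √P)²·N/((√Q − √P)² + N) on [0, Q] is convex if and only if Q ≤ 4N; equivalently, when Q > 4N, S_ℓ fails to be convex on [0, Q]. -/
/-!
With `r = √Q` and `s = √P`, the second derivative of `S_ℓ` at `P ∈ (0, Q)` has the sign of
`r ((s - r)² + N) - 4 s (s - r)² = r (4N - r²) / 4 + (2s - r)² (5r - 4s) / 4`.
For `0 < s < r` the second summand is nonnegative, so `S_ℓ'' ≥ 0` on `(0, Q)` when `Q ≤ 4N`;
at `s = r / 2`, i.e. `P = Q / 4`, it vanishes, so `S_ℓ''(Q / 4) < 0` when `Q > 4N`.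
-/

open Real

theorem ConvexOn.nonneg_of_hasDerivAt2 {s : Set ℝ} {f f' : ℝ → ℝ} {f'' x : ℝ}
    (hf : ConvexOn ℝ s f) (hs : IsOpen s) (hf' : ∀ y ∈ s, HasDerivAt f (f' y) y)
    (hf'' : HasDerivAt f' f'' x) (hx : x ∈ s) : 0 ≤ f'' := by
  have hmono : MonotoneOn f' s :=
    (hf.monotoneOn_deriv fun y hy => (hf' y hy).differentiableAt).congr
      fun y hy => (hf' y hy).deriv
  exact hf''.hasDerivWithinAt.nonneg_of_monotoneOn (hs.preperfect x hx) hmono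

theorem HasDerivAt.comp_sqrt {g : ℝ → ℝ} {g' x : ℝ} (hx : 0 < x)
    (hg : HasDerivAt g (2 * √x * g') (√x)) : HasDerivAt (fun y => g (√y)) g' x := by
  have hsx : √x ≠ 0 := (sqrt_pos.2 hx).ne'
  refine (hg.comp x (hasDerivAt_sqrt hx.ne')).congr_deriv ?_
  field_simp

/-- `S_ℓ(P) = sl (√Q) N (√P)`. -/
noncomputable def sl (r N s : ℝ) : ℝ := (r - s) ^ 2 * N / ((r - s) ^ 2 + N)

noncomputable def slDeriv (r N s : ℝ) : ℝ := N ^ 2 * (s - r) / (s * ((s - r) ^ 2 + N) ^ 2)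

noncomputable def slDeriv2 (r N s : ℝ) : ℝ :=
  N ^ 2 * (r * ((s - r) ^ 2 + N) - 4 * s * (s - r) ^ 2) / (2 * s ^ 3 * ((s - r) ^ 2 + N) ^ 3)

section

variable {r N : ℝ}

theorem continuous_sl (hN : 0 < N) : Continuous (sl r N) :=
  Continuous.div (by fun_prop) (by fun_prop) fun s => by positivity

theorem hasDerivAt_sl (hN : 0 < N) {s : ℝ} (hs : s ≠ 0) :
    HasDerivAt (sl r N) (2 * s * slDeriv r N s) s := by
  have hD : (r - s) ^ 2 + N ≠ 0 := by positivity
  have hsq : HasDerivAt (fun s => (r - s) ^ 2) (2 * (r - s) * -1) s := by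
    simpa using ((hasDerivAt_id s).const_sub r).fun_pow 2
  refine ((hsq.mul_const N).div (hsq.add_const N) hD).congr_deriv ?_
  unfold slDeriv
  field_simp
  ring

theorem hasDerivAt_slDeriv (hN : 0 < N) {s : ℝ} (hs : s ≠ 0) :
    HasDerivAt (slDeriv r N) (2 * s * slDeriv2 r N s) s := by
  have hD : (s - r) ^ 2 + N ≠ 0 := by positivity
  have hnum : HasDerivAt (fun s => N ^ 2 * (s - r)) (N ^ 2 * 1) s :=
    ((hasDerivAt_id' s).sub_const r).const_mul _
  have hden : HasDerivAt (fun s => s * ((s - r) ^ 2 + N) ^ 2)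
      (1 * ((s - r) ^ 2 + N) ^ 2 + s * (2 * ((s - r) ^ 2 + N) * (2 * (s - r)))) s := by
    have hsq : HasDerivAt (fun s => (s - r) ^ 2 + N) (2 * (s - r)) s := by
      simpa using (((hasDerivAt_id s).sub_const r).fun_pow 2).add_const N
    simpa using (hasDerivAt_id' s).fun_mul (hsq.fun_pow 2)
  refine (hnum.div hden (mul_ne_zero hs (pow_ne_zero 2 hD))).congr_deriv ?_
  unfold slDeriv2
  field_simp
  ring

theorem slDeriv2_nonneg (hr : 0 < r) (hN : 0 < N) (hrN : r ^ 2 ≤ 4 * N) {s : ℝ}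
    (hs : 0 < s) (hsr : s < r) : 0 ≤ slDeriv2 r N s := by
  have key : r * ((s - r) ^ 2 + N) - 4 * s * (s - r) ^ 2
      = r * (4 * N - r ^ 2) / 4 + (2 * s - r) ^ 2 * (5 * r - 4 * s) / 4 := by ring
  unfold slDeriv2
  rw [key]
  have : 0 ≤ 5 * r - 4 * s := by linarith
  positivity

theorem slDeriv2_half_neg (hr : 0 < r) (hN : 0 < N) (hrN : 4 * N < r ^ 2) :
    slDeriv2 r N (r / 2) < 0 := by
  have key : r * ((r / 2 - r) ^ 2 + N) - 4 * (r / 2) * (r / 2 - r) ^ 2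
      = -(r * (r ^ 2 - 4 * N) / 4) := by ring
  unfold slDeriv2
  rw [key, mul_neg, neg_div]
  have : 0 < r ^ 2 - 4 * N := by linarith
  simp only [Left.neg_neg_iff]
  positivity

end

/-- `Sℓ` is convex on `[0, Q]` if and only if `Q ≤ 4N`. -/
theorem Sl_convex_iff (Q N : ℝ) (hQ : 0 < Q) (hN : 0 < N) :
    ConvexOn ℝ (Set.Icc 0 Q) (fun P : ℝ =>
        (Real.sqrt Q - Real.sqrt P) ^ 2 * N / ((Real.sqrt Q - Real.sqrt P) ^ 2 + N)) ↔
      Q ≤ 4 * N := by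
  change ConvexOn ℝ (Set.Icc 0 Q) (fun P => sl (√Q) N (√P)) ↔ _
  have hr : 0 < √Q := sqrt_pos.2 hQ
  have hrQ : √Q ^ 2 = Q := sq_sqrt hQ.le
  have hf' (P : ℝ) (hP : 0 < P) : HasDerivAt (fun P => sl (√Q) N (√P)) (slDeriv (√Q) N (√P)) P :=
    HasDerivAt.comp_sqrt hP (hasDerivAt_sl hN (sqrt_pos.2 hP).ne')
  have hf'' (P : ℝ) (hP : 0 < P) :
      HasDerivAt (fun P => slDeriv (√Q) N (√P)) (slDeriv2 (√Q) N (√P)) P :=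
    HasDerivAt.comp_sqrt hP (hasDerivAt_slDeriv hN (sqrt_pos.2 hP).ne')
  constructor
  · intro hconv
    by_contra! hlt
    have hmem : Q / 4 ∈ Set.Ioo 0 Q := ⟨by linarith, by linarith⟩
    have hsqrt : √(Q / 4) = √Q / 2 := by
      rw [show Q / 4 = (√Q / 2) ^ 2 by rw [div_pow, hrQ]; norm_num, sqrt_sq (by positivity)]
    have hnonneg := (hconv.subset Set.Ioo_subset_Icc_self (convex_Ioo 0 Q)).nonneg_of_hasDerivAt2
      isOpen_Ioo (fun P hP => hf' P hP.1) (hf'' _ hmem.1) hmem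
    rw [hsqrt] at hnonneg
    exact (slDeriv2_half_neg hr hN (by linarith)).not_ge hnonneg
  · intro hQN
    refine convexOn_of_hasDerivWithinAt2_nonneg (f' := fun P => slDeriv (√Q) N (√P))
      (f'' := fun P => slDeriv2 (√Q) N (√P)) (convex_Icc 0 Q)
      ((continuous_sl hN).comp continuous_sqrt).continuousOn ?_ ?_ ?_ <;>
      rw [interior_Icc] <;> intro P hP
    · exact (hf' P hP.1).hasDerivWithinAt
    · exact (hf'' P hP.1).hasDerivWithinAt
    · exact slDeriv2_nonneg hr hN (by linarith) (sqrt_pos.2 hP.1) (sqrt_lt_sqrt hP.1.le hP.2)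
end

section
/- Let P, Q, N > 0 with P < Q and suppose −1 + ρ2² + ρ4² ≤ 0, −1 + ρ3² + ρ5² ≤ 0, and Nρ2² + Pρ2²(1−ρ3²) − Pρ5²(1−ρ4²) ≤ 0, with ρ4² < 1. Then F(ρ2,ρ3,ρ4,ρ5) = [−Pρ2²ρ3² − (Q + 2ρ3√(PQ))(−1 + ρ2² + ρ4²) + P(1−ρ4²)(1−ρ5²)]/(1−ρ4²) satisfies F ≥ N(Q − N − P)/(N + P) whenever (P+N)² ≤ QP, and F ≥ (√Q − √P)² whenever (P+N)² > QP. -/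
/-!
Write `P = a²`, `Q = b²`, `D = 1 - ρ4²`, `r = |ρ3|`. Replacing `ρ3` by `-r` and `1 - ρ5²` by
its lower bound `ρ3²` shows that the numerator of `F` is at least `(b - r a)² (D - ρ2²)`, while the
second and third constraints give `(D - ρ2²) / D ≥ N / (N + P (1 - ρ3²))`. Hence `F` is bounded below by a
function of `r ∈ [0, 1]` alone, and the two bounds of the theorem are its minimum over `r` in the
two regimes, each following from an explicit sum-of-squares identity.
-/

open Real

noncomputable def F (P Q ρ2 ρ3 ρ4 ρ5 : ℝ) : ℝ :=
  (-(P * ρ2 ^ 2 * ρ3 ^ 2) - (Q + 2 * ρ3 * √(P * Q)) * (-1 + ρ2 ^ 2 + ρ4 ^ 2) +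
    P * (1 - ρ4 ^ 2) * (1 - ρ5 ^ 2)) / (1 - ρ4 ^ 2)

/-- The lower bound for `F (a²) (b²) ρ2 ρ3 ρ4 ρ5` at `|ρ3| = r` left after eliminating
`ρ2`, `ρ4` and `ρ5`. -/
noncomputable def reducedObjective (a b N r : ℝ) : ℝ :=
  (b - r * a) ^ 2 * N / (N + a ^ 2 * (1 - r ^ 2))

lemma sq_mul_le_numerator {a b ρ s v D : ℝ} (ha : 0 ≤ a) (hb : 0 ≤ b) (hs : s ≤ D)
    (hv : ρ ^ 2 + v ≤ 1) (hD : 0 ≤ D) :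
    (b - |ρ| * a) ^ 2 * (D - s) ≤
      -(a ^ 2 * s * ρ ^ 2) + (b ^ 2 + 2 * ρ * (a * b)) * (D - s) + a ^ 2 * D * (1 - v) := by
  have hρ : 0 ≤ ρ + |ρ| := by linarith [neg_abs_le ρ]
  have h₁ : 0 ≤ a * b * (ρ + |ρ|) * (D - s) := by
    have := sub_nonneg.2 hs
    positivity
  have h₂ : 0 ≤ a ^ 2 * D * (1 - v - ρ ^ 2) := by
    have : 0 ≤ 1 - v - ρ ^ 2 := by linarith
    positivity
  have hρsq : |ρ| ^ 2 = ρ ^ 2 := sq_abs ρ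
  linear_combination 2 * h₁ + h₂ + (a ^ 2 * (D - s)) * hρsq

lemma mul_le_sub_mul_of_constraint {N P ρ s v D : ℝ} (hP : 0 ≤ P) (hD : 0 ≤ D)
    (hv : ρ ^ 2 + v ≤ 1) (hc : N * s + P * s * (1 - ρ ^ 2) - P * v * D ≤ 0) :
    D * N ≤ (D - s) * (N + P * (1 - ρ ^ 2)) := by
  have : 0 ≤ P * D * (1 - ρ ^ 2 - v) := mul_nonneg (mul_nonneg hP hD) (by linarith)
  linear_combination hc + this

lemma reducedObjective_le_F {a b N ρ2 ρ3 ρ4 ρ5 : ℝ} (ha : 0 ≤ a) (hb : 0 ≤ b) (hN : 0 < N)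
    (hc1 : -1 + ρ2 ^ 2 + ρ4 ^ 2 ≤ 0) (hc2 : -1 + ρ3 ^ 2 + ρ5 ^ 2 ≤ 0)
    (hc3 : N * ρ2 ^ 2 + a ^ 2 * ρ2 ^ 2 * (1 - ρ3 ^ 2) - a ^ 2 * ρ5 ^ 2 * (1 - ρ4 ^ 2) ≤ 0)
    (hρ4 : ρ4 ^ 2 < 1) :
    reducedObjective a b N |ρ3| ≤ F (a ^ 2) (b ^ 2) ρ2 ρ3 ρ4 ρ5 := by
  have hD : 0 < 1 - ρ4 ^ 2 := by linarith
  have hM : 0 < N + a ^ 2 * (1 - ρ3 ^ 2) := by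
    have : 0 ≤ 1 - ρ3 ^ 2 := by linarith [sq_nonneg ρ5]
    positivity
  have hv : ρ3 ^ 2 + ρ5 ^ 2 ≤ 1 := by linarith
  have hnum := sq_mul_le_numerator (s := ρ2 ^ 2) ha hb (by linarith) hv hD.le
  have hratio := mul_le_sub_mul_of_constraint (sq_nonneg a) hD.le hv hc3
  have hsqrt : √(a ^ 2 * b ^ 2) = a * b := by rw [← mul_pow, sqrt_sq (mul_nonneg ha hb)]
  rw [reducedObjective, F, sq_abs, hsqrt, div_le_div_iff₀ hM hD]
  calc (b - |ρ3| * a) ^ 2 * N * (1 - ρ4 ^ 2)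
      = (b - |ρ3| * a) ^ 2 * ((1 - ρ4 ^ 2) * N) := by ring
    _ ≤ (b - |ρ3| * a) ^ 2 * ((1 - ρ4 ^ 2 - ρ2 ^ 2) * (N + a ^ 2 * (1 - ρ3 ^ 2))) := by
      gcongr
    _ = (b - |ρ3| * a) ^ 2 * (1 - ρ4 ^ 2 - ρ2 ^ 2) * (N + a ^ 2 * (1 - ρ3 ^ 2)) := by ring
    _ ≤ _ := by
      gcongr
      linear_combination hnum

lemma div_le_reducedObjective {a b N r : ℝ} (hN : 0 < N) (hr : r ^ 2 ≤ 1) :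
    N * (b ^ 2 - N - a ^ 2) / (N + a ^ 2) ≤ reducedObjective a b N r := by
  have hM : 0 < N + a ^ 2 * (1 - r ^ 2) := by
    have : 0 ≤ 1 - r ^ 2 := by linarith
    positivity
  rw [reducedObjective, div_le_div_iff₀ (by positivity) hM]
  have : 0 ≤ N * (N + a ^ 2 - r * a * b) ^ 2 := by positivity
  linear_combination this

lemma sub_sq_le_reducedObjective {a b N r : ℝ} (ha : 0 ≤ a) (hab : a ≤ b) (hN : 0 < N)
    (hr₀ : 0 ≤ r) (hr₁ : r ≤ 1) (hregime : a * b ≤ N + a ^ 2) :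
    (b - a) ^ 2 ≤ reducedObjective a b N r := by
  have hM : 0 < N + a ^ 2 * (1 - r ^ 2) := by
    have : 0 ≤ 1 - r ^ 2 := by nlinarith
    positivity
  rw [reducedObjective, le_div_iff₀ hM]
  have : 0 ≤ a * (1 - r) * (2 * (b - a) * (N + a ^ 2 - a * b) + a * (1 - r) * (N + (b - a) ^ 2)) := by
    have := sub_nonneg.2 hr₁
    have := sub_nonneg.2 hab
    have := sub_nonneg.2 hregime
    positivity
  linear_combination this

theorem F_lower_bound_general
    (P Q N ρ2 ρ3 ρ4 ρ5 : ℝ) (hP : 0 < P) (hQ : 0 < Q) (hN : 0 < N) (hPQ : P < Q)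
    (hρ3 : ρ3 ∈ Set.Icc (-1 : ℝ) 1)
    (hc1 : -1 + ρ2 ^ 2 + ρ4 ^ 2 ≤ 0)
    (hc2 : -1 + ρ3 ^ 2 + ρ5 ^ 2 ≤ 0)
    (hc3 : N * ρ2 ^ 2 + P * ρ2 ^ 2 * (1 - ρ3 ^ 2) - P * ρ5 ^ 2 * (1 - ρ4 ^ 2) ≤ 0)
    (hρ4sq : ρ4 ^ 2 < 1) :
    (((P + N) ^ 2 ≤ Q * P) →
      N * (Q - N - P) / (N + P) ≤
        (-(P * ρ2 ^ 2 * ρ3 ^ 2) -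
            (Q + 2 * ρ3 * Real.sqrt (P * Q)) * (-1 + ρ2 ^ 2 + ρ4 ^ 2) +
            P * (1 - ρ4 ^ 2) * (1 - ρ5 ^ 2)) / (1 - ρ4 ^ 2)) ∧
    (((P + N) ^ 2 > Q * P) →
      (Real.sqrt Q - Real.sqrt P) ^ 2 ≤
        (-(P * ρ2 ^ 2 * ρ3 ^ 2) -
            (Q + 2 * ρ3 * Real.sqrt (P * Q)) * (-1 + ρ2 ^ 2 + ρ4 ^ 2) +
            P * (1 - ρ4 ^ 2) * (1 - ρ5 ^ 2)) / (1 - ρ4 ^ 2)) := by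
  obtain ⟨a, ha, rfl⟩ : ∃ a, 0 ≤ a ∧ a ^ 2 = P := ⟨√P, sqrt_nonneg P, sq_sqrt hP.le⟩
  obtain ⟨b, hb, rfl⟩ : ∃ b, 0 ≤ b ∧ b ^ 2 = Q := ⟨√Q, sqrt_nonneg Q, sq_sqrt hQ.le⟩
  have hF : reducedObjective a b N |ρ3| ≤ F (a ^ 2) (b ^ 2) ρ2 ρ3 ρ4 ρ5 :=
    reducedObjective_le_F ha hb hN hc1 hc2 hc3 hρ4sq
  have hr : |ρ3| ≤ 1 := abs_le.2 hρ3
  refine ⟨fun _ ↦ (div_le_reducedObjective hN (pow_le_one₀ (abs_nonneg ρ3) hr)).trans hF,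
    fun hregime ↦ ?_⟩
  have hab : a ≤ b := (pow_le_pow_iff_left₀ ha hb two_ne_zero).1 hPQ.le
  have hprod : a * b ≤ N + a ^ 2 := by
    refine (pow_le_pow_iff_left₀ (by positivity) (by positivity) two_ne_zero).1 ?_
    linarith
  rw [sqrt_sq ha, sqrt_sq hb]
  exact (sub_sq_le_reducedObjective ha hab hN (abs_nonneg ρ3) hr hprod).trans hF

/-- Core optimization lower bound (Case 2 of the main theorem): under the
constraints `−1+ρ2²+ρ4² ≤ 0`, `−1+ρ3²+ρ5² ≤ 0`,
`Nρ2² + Pρ2²(1−ρ3²) − Pρ5²(1−ρ4²) ≤ 0` and `ρ4² < 1`, the objective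
`F = [−Pρ2²ρ3² − (Q+2ρ3√(PQ))(−1+ρ2²+ρ4²) + P(1−ρ4²)(1−ρ5²)]/(1−ρ4²)` satisfies
`F ≥ N(Q−N−P)/(N+P)` when `(P+N)² ≤ QP`, and `F ≥ (√Q−√P)²` when `(P+N)² > QP`. -/
theorem F_lower_bound
    (P Q N ρ2 ρ3 ρ4 ρ5 : ℝ) (hP : 0 < P) (hQ : 0 < Q) (hN : 0 < N) (hPQ : P < Q)
    (hρ2 : ρ2 ∈ Set.Icc (-1 : ℝ) 1) (hρ3 : ρ3 ∈ Set.Icc (-1 : ℝ) 1)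
    (hρ4 : ρ4 ∈ Set.Icc (-1 : ℝ) 1) (hρ5 : ρ5 ∈ Set.Icc (-1 : ℝ) 1)
    (hc1 : -1 + ρ2 ^ 2 + ρ4 ^ 2 ≤ 0)
    (hc2 : -1 + ρ3 ^ 2 + ρ5 ^ 2 ≤ 0)
    (hc3 : N * ρ2 ^ 2 + P * ρ2 ^ 2 * (1 - ρ3 ^ 2) - P * ρ5 ^ 2 * (1 - ρ4 ^ 2) ≤ 0)
    (hρ4sq : ρ4 ^ 2 < 1) :
    (((P + N) ^ 2 ≤ Q * P) →
      N * (Q - N - P) / (N + P) ≤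
        (-(P * ρ2 ^ 2 * ρ3 ^ 2) -
            (Q + 2 * ρ3 * Real.sqrt (P * Q)) * (-1 + ρ2 ^ 2 + ρ4 ^ 2) +
            P * (1 - ρ4 ^ 2) * (1 - ρ5 ^ 2)) / (1 - ρ4 ^ 2)) ∧
    (((P + N) ^ 2 > Q * P) →
      (Real.sqrt Q - Real.sqrt P) ^ 2 ≤
        (-(P * ρ2 ^ 2 * ρ3 ^ 2) -
            (Q + 2 * ρ3 * Real.sqrt (P * Q)) * (-1 + ρ2 ^ 2 + ρ4 ^ 2) +
            P * (1 - ρ4 ^ 2) * (1 - ρ5 ^ 2)) / (1 - ρ4 ^ 2)) :=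
  F_lower_bound_general P Q N ρ2 ρ3 ρ4 ρ5 hP hQ hN hPQ hρ3 hc1 hc2 hc3 hρ4sq
end
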